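/- Let Φ be a quantum channel and suppose ρ₁,…,ρ_n are density operators such that Φ(ρ₁),…,Φ(ρ_n) have pairwise orthogonal supports. For each i, let |ψ_i⟩ be any unit vector in the support of ρ_i. Then Φ(|ψ₁⟩⟨ψ₁|),…,Φ(|ψ_n⟩⟨ψ_n|) also have pairwise orthogonal supports. Hence α(Φ) is attained on pure states. -/

import Mathlib

open Matrix ComplexOrder

/-- A density operator: positive semidefinite with trace 1. -/
def IsDensity {n : ℕ} (ρ : Matrix (Fin n) (Fin n) ℂ) : Prop :=
  ρ.PosSemidef ∧ ρ.trace = 1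

/-- The outer product `|ψ⟩⟨ψ|`. -/
def outer {n : ℕ} (ψ : Fin n → ℂ) : Matrix (Fin n) (Fin n) ℂ :=
  vecMulVec ψ (star ψ)

/-- The channel with Kraus operators `E k`. -/
noncomputable def krausChannel {n r : ℕ} (E : Fin r → Matrix (Fin n) (Fin n) ℂ)
    (ρ : Matrix (Fin n) (Fin n) ℂ) : Matrix (Fin n) (Fin n) ℂ :=
  ∑ k, E k * ρ * (E k)ᴴ

/-- Two operators have orthogonal supports. -/
def OrthSupports {n : ℕ} (A B : Matrix (Fin n) (Fin n) ℂ) : Prop :=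
  ∀ x y : Fin n → ℂ, star (A.mulVec x) ⬝ᵥ (B.mulVec y) = 0

/-!
Factor `ρᵢ = Mᵢ Mᵢᴴ`, so that `Φ(ρᵢ) = ∑ₖ (Eₖ Mᵢ)(Eₖ Mᵢ)ᴴ`. The trace of `Φ(ρᵢ) Φ(ρⱼ)` is then
`∑ₖₗ ‖(Eₖ Mᵢ)ᴴ (Eₗ Mⱼ)‖²`, so orthogonality of the supports of `Φ(ρᵢ)` and `Φ(ρⱼ)` is equivalent
to `(Eₖ Mᵢ)ᴴ (Eₗ Mⱼ) = 0` for all `k, l`. A vector in the support of `ρᵢ` has the form `Mᵢ c`,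
so `|ψᵢ⟩⟨ψᵢ| = (Mᵢ C)(Mᵢ C)ᴴ` with `C` the column `c`, and the corresponding products for the
pure states are `Cᴴ (Eₖ Mᵢ)ᴴ (Eₗ Mⱼ) D = 0`.
-/

theorem orthSupports_iff_conjTranspose_mul_eq_zero {n : ℕ} (A B : Matrix (Fin n) (Fin n) ℂ) :
    OrthSupports A B ↔ Aᴴ * B = 0 := by
  refine ⟨fun h => ?_, fun h x y => ?_⟩
  · ext s t
    simpa [mul_apply, mulVec_single_one, dotProduct, conjTranspose_apply] using
      h (Pi.single s 1) (Pi.single t 1)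
  · rw [star_mulVec, dotProduct_mulVec, vecMul_vecMul, h, vecMul_zero, zero_dotProduct]

theorem conjTranspose_sum_mul_conjTranspose_self_mul_sum_eq_zero_iff
    {R m ι κ α β : Type*} [CommRing R] [PartialOrder R] [StarRing R] [StarOrderedRing R]
    [NoZeroDivisors R] [Fintype m] [Fintype ι] [Fintype κ] [Fintype α] [Fintype β]
    (X : ι → Matrix m α R) (Y : κ → Matrix m β R) :
    (∑ k, X k * (X k)ᴴ)ᴴ * ∑ l, Y l * (Y l)ᴴ = 0 ↔ ∀ k l, (X k)ᴴ * Y l = 0 := by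
  simp only [conjTranspose_sum, conjTranspose_mul, conjTranspose_conjTranspose, Finset.sum_mul_sum]
  refine ⟨fun h k l => ?_, fun h => Finset.sum_eq_zero fun k _ => Finset.sum_eq_zero fun l _ => ?_⟩
  · have htrace : ∀ k l, (X k * (X k)ᴴ * (Y l * (Y l)ᴴ)).trace
        = (((X k)ᴴ * Y l)ᴴ * ((X k)ᴴ * Y l)).trace := by
      intro k l
      simp only [conjTranspose_mul, conjTranspose_conjTranspose, ← Matrix.mul_assoc]
      rw [trace_mul_comm, ← Matrix.mul_assoc, ← Matrix.mul_assoc]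
    have hnonneg : ∀ k l, 0 ≤ (((X k)ᴴ * Y l)ᴴ * ((X k)ᴴ * Y l)).trace := fun k l =>
      (posSemidef_conjTranspose_mul_self _).trace_nonneg
    have hsum := congrArg trace h
    simp only [trace_sum, htrace, trace_zero] at hsum
    have hk := (Finset.sum_eq_zero_iff_of_nonneg fun k _ =>
      Finset.sum_nonneg fun l _ => hnonneg k l).1 hsum k (Finset.mem_univ k)
    have hkl := (Finset.sum_eq_zero_iff_of_nonneg fun l _ => hnonneg k l).1 hk l (Finset.mem_univ l)
    exact trace_conjTranspose_mul_self_eq_zero_iff.1 hkl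
  · rw [Matrix.mul_assoc, ← Matrix.mul_assoc (X k)ᴴ, h, Matrix.zero_mul, Matrix.mul_zero]

open scoped MatrixOrder in
theorem Matrix.PosSemidef.exists_eq_mul_conjTranspose {𝕜 n : Type*} [RCLike 𝕜] [Fintype n]
    {ρ : Matrix n n 𝕜} (hρ : ρ.PosSemidef) : ∃ M : Matrix n n 𝕜, ρ = M * Mᴴ := by
  classical
  obtain ⟨B, rfl⟩ := CStarAlgebra.nonneg_iff_eq_star_mul_self.mp hρ.nonneg
  exact ⟨Bᴴ, by rw [conjTranspose_conjTranspose]; rfl⟩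

theorem krausChannel_mul_conjTranspose {n r : ℕ} {α : Type*} [Fintype α]
    (E : Fin r → Matrix (Fin n) (Fin n) ℂ) (M : Matrix (Fin n) α ℂ) :
    krausChannel E (M * Mᴴ) = ∑ k, (E k * M) * (E k * M)ᴴ := by
  simp only [krausChannel, conjTranspose_mul, Matrix.mul_assoc]

theorem orthSupports_krausChannel_mul_conjTranspose_iff {n r : ℕ} {α β : Type*}
    [Fintype α] [Fintype β] (E : Fin r → Matrix (Fin n) (Fin n) ℂ)
    (M : Matrix (Fin n) α ℂ) (N : Matrix (Fin n) β ℂ) :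
    OrthSupports (krausChannel E (M * Mᴴ)) (krausChannel E (N * Nᴴ)) ↔
      ∀ k l, (E k * M)ᴴ * (E l * N) = 0 := by
  rw [orthSupports_iff_conjTranspose_mul_eq_zero, krausChannel_mul_conjTranspose,
    krausChannel_mul_conjTranspose, conjTranspose_sum_mul_conjTranspose_self_mul_sum_eq_zero_iff]

theorem outer_mulVec {n : ℕ} {α : Type*} [Fintype α] (M : Matrix (Fin n) α ℂ) (c : α → ℂ) :
    outer (M *ᵥ c) = (M * replicateCol Unit c) * (M * replicateCol Unit c)ᴴ := by
  rw [outer, vecMulVec_eq Unit, ← conjTranspose_replicateCol, replicateCol_mulVec]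

theorem OrthSupports.krausChannel_outer_mulVec {n r : ℕ} {α β : Type*}
    [Fintype α] [Fintype β] {E : Fin r → Matrix (Fin n) (Fin n) ℂ}
    {M : Matrix (Fin n) α ℂ} {N : Matrix (Fin n) β ℂ}
    (h : OrthSupports (krausChannel E (M * Mᴴ)) (krausChannel E (N * Nᴴ)))
    (c : α → ℂ) (d : β → ℂ) :
    OrthSupports (krausChannel E (outer (M *ᵥ c))) (krausChannel E (outer (N *ᵥ d))) := by
  rw [orthSupports_krausChannel_mul_conjTranspose_iff] at h
  rw [outer_mulVec, outer_mulVec, orthSupports_krausChannel_mul_conjTranspose_iff]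
  intro k l
  calc (E k * (M * replicateCol Unit c))ᴴ * (E l * (N * replicateCol Unit d))
      = (replicateCol Unit c)ᴴ * ((E k * M)ᴴ * (E l * N)) * replicateCol Unit d := by
        simp only [conjTranspose_mul, Matrix.mul_assoc]
    _ = 0 := by rw [h k l, Matrix.mul_zero, Matrix.zero_mul]

theorem alpha_attained_on_pure_states_general
    {n r m : ℕ} (E : Fin r → Matrix (Fin n) (Fin n) ℂ)
    (ρ : Fin m → Matrix (Fin n) (Fin n) ℂ) (hρ : ∀ i, IsDensity (ρ i))
    (horth : ∀ i j, i ≠ j →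
      OrthSupports (krausChannel E (ρ i)) (krausChannel E (ρ j)))
    (ψ : Fin m → (Fin n → ℂ))
    (hsupp : ∀ i, ∃ v : Fin n → ℂ, (ρ i).mulVec v = ψ i) :
    ∀ i j, i ≠ j →
      OrthSupports (krausChannel E (outer (ψ i))) (krausChannel E (outer (ψ j))) := by
  intro i j hij
  obtain ⟨M, hM⟩ := PosSemidef.exists_eq_mul_conjTranspose (hρ i).1
  obtain ⟨N, hN⟩ := PosSemidef.exists_eq_mul_conjTranspose (hρ j).1
  obtain ⟨v, hv⟩ := hsupp i
  obtain ⟨w, hw⟩ := hsupp j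
  have h := horth i j hij
  rw [hM, hN] at h
  rw [← hv, ← hw, hM, hN, ← mulVec_mulVec, ← mulVec_mulVec]
  exact h.krausChannel_outer_mulVec _ _

theorem alpha_attained_on_pure_states
    {n r m : ℕ} (E : Fin r → Matrix (Fin n) (Fin n) ℂ)
    (hE : ∑ k, (E k)ᴴ * E k = 1)
    (ρ : Fin m → Matrix (Fin n) (Fin n) ℂ) (hρ : ∀ i, IsDensity (ρ i))
    (horth : ∀ i j, i ≠ j →
      OrthSupports (krausChannel E (ρ i)) (krausChannel E (ρ j)))
    (ψ : Fin m → (Fin n → ℂ)) (hunit : ∀ i, star (ψ i) ⬝ᵥ ψ i = 1)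
    (hsupp : ∀ i, ∃ v : Fin n → ℂ, (ρ i).mulVec v = ψ i) :
    ∀ i j, i ≠ j →
      OrthSupports (krausChannel E (outer (ψ i))) (krausChannel E (outer (ψ j))) :=
  alpha_attained_on_pure_states_general E ρ hρ horth ψ hsupp
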